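/- arXiv:1601.00511 — 4 statements merged into one kernel-verified Lean document; each statement's English description precedes it below -/
import Mathlib

section
/- Let $p_n$ be the average characteristic polynomial of a polynomial ensemble. Then $p_n$ satisfies the orthogonality conditions $\int_{\mathbb{R}} p_n(x) f_j(x)\,dx = 0$ for $j = 0,\dots,n-1$. -/
/-!
Writing `Δ` for the Vandermonde product, `Δ(y) ∏ᵢ (x - yᵢ) = ± det V(x, y₁, …, yₙ)`, the
Vandermonde determinant in `n + 1` variables. Expanding `det [f_k(y_j)]` over permutations `τ`
and integrating out `y` column by column turns `p_n(x)` into a combination of the determinants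
`D_τ(x)` of the `(n + 1) × (n + 1)` matrices whose first column is `(x^a)_a` and whose other
columns are the moment vectors `(∫ t^a f_{τ i}(t) dt)_a`. Integrating `D_τ(x)` against `f_j`
replaces the first column by the moment vector of `f_j`, which is also one of the other columns,
so every term vanishes.
-/

open MeasureTheory Polynomial Finset Matrix Equiv

section Algebra

variable {R : Type*} [CommRing R] {n : ℕ}

theorem prod_filter_lt_eq_prod_prod_Ioi {M ι : Type*} [CommMonoid M] [Fintype ι] [LinearOrder ι]
    [LocallyFiniteOrderTop ι] (g : ι → ι → M) :
    ∏ p ∈ univ.filter (fun p : ι × ι => p.1 < p.2), g p.1 p.2 = ∏ i, ∏ j ∈ Ioi i, g i j := by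
  rw [prod_filter, ← univ_product_univ, prod_product]
  refine prod_congr rfl fun i _ => ?_
  rw [← prod_filter]
  congr 1
  ext j
  simp

theorem det_vandermonde_cons (x : R) (y : Fin n → R) :
    det (vandermonde (Fin.cons x y)) =
      (∏ i, (y i - x)) *
        ∏ p ∈ univ.filter (fun p : Fin n × Fin n => p.1 < p.2), (y p.2 - y p.1) := by
  rw [det_vandermonde, prod_filter_lt_eq_prod_prod_Ioi (fun i j => y j - y i), Fin.prod_univ_succ,
    Fin.prod_Ioi_zero]
  simp [Fin.prod_Ioi_succ]

theorem prod_filter_lt_sub_mul_prod_sub (x : R) (y : Fin n → R) :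
    (∏ p ∈ univ.filter (fun p : Fin n × Fin n => p.1 < p.2), (y p.2 - y p.1)) * ∏ i, (x - y i) =
      (-1) ^ n * det (vandermonde (Fin.cons x y)) := by
  have hflip : ∏ i, (x - y i) = (-1) ^ n * ∏ i, (y i - x) := by
    simpa using prod_neg (s := univ) fun i => y i - x
  rw [det_vandermonde_cons, hflip]
  ring

theorem det_eq_sum_perm_fin_succ (M : Matrix (Fin (n + 1)) (Fin (n + 1)) R) :
    det M = ∑ σ : Perm (Fin (n + 1)),
      (Perm.sign σ : ℤ) * (M (σ 0) 0 * ∏ i : Fin n, M (σ i.succ) i.succ) := by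
  simp [det_apply', Fin.prod_univ_succ]

theorem det_of_apply_comp_eq_sum {α : Type*} (f : Fin n → α → R) (y : Fin n → α) :
    det (of fun j k => f k (y j)) = ∑ τ : Perm (Fin n), (Perm.sign τ : ℤ) * ∏ i, f (τ i) (y i) := by
  simp [← det_transpose (of _), det_apply']

theorem det_vandermonde_cons_mul_prod (h : Fin n → R → R) (x : R) (y : Fin n → R) :
    det (vandermonde (Fin.cons x y)) * ∏ i, h i (y i) =
      ∑ σ : Perm (Fin (n + 1)),
        (Perm.sign σ : ℤ) * x ^ (σ 0 : ℕ) * ∏ i, (y i ^ (σ i.succ : ℕ) * h i (y i)) := by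
  rw [← det_transpose, det_eq_sum_perm_fin_succ, sum_mul]
  refine sum_congr rfl fun σ _ => ?_
  simp only [transpose_apply, vandermonde_apply, Fin.cons_zero, Fin.cons_succ, prod_mul_distrib]
  ring

theorem prod_filter_lt_sub_mul_det_mul_prod_sub (f : Fin n → R → R) (x : R) (y : Fin n → R) :
    (∏ p ∈ univ.filter (fun p : Fin n × Fin n => p.1 < p.2), (y p.2 - y p.1)) *
        det (of fun j k => f k (y j)) * ∏ i, (x - y i) =
      (-1) ^ n * ∑ τ : Perm (Fin n),
        (Perm.sign τ : ℤ) * (det (vandermonde (Fin.cons x y)) * ∏ i, f (τ i) (y i)) := by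
  rw [mul_right_comm, prod_filter_lt_sub_mul_prod_sub, det_of_apply_comp_eq_sum, mul_sum, mul_sum]
  exact sum_congr rfl fun τ _ => by ring

theorem det_of_cons_eq_sum (v : Fin (n + 1) → R) (c : Fin (n + 1) → Fin n → R) :
    det (of fun a => (Fin.cons (v a) (c a) : Fin (n + 1) → R)) =
      ∑ a, v a * ((-1) ^ (a : ℕ) * det (of fun a' i => c (a.succAbove a') i)) := by
  rw [det_succ_column_zero]
  refine sum_congr rfl fun a _ => ?_
  simp only [of_apply, Fin.cons_zero]
  rw [mul_comm ((-1 : R) ^ (a : ℕ)), mul_assoc]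
  rfl

end Algebra

section Moments

variable (ν : Measure ℝ) {n : ℕ}

noncomputable def moment (g : ℝ → ℝ) (k : ℕ) : ℝ := ∫ t, t ^ k * g t ∂ν

noncomputable def momentDet (h : Fin n → ℝ → ℝ) (x : ℝ) : ℝ :=
  det (of fun (a : Fin (n + 1)) =>
    (Fin.cons (x ^ (a : ℕ)) fun i => moment ν (h i) a : Fin (n + 1) → ℝ))

variable {ν}

theorem integrable_pow_mul_of_integrable_abs {g : ℝ → ℝ} (hg : Integrable g ν) {k : ℕ}
    (hk : Integrable (fun t => |t| ^ k * |g t|) ν) : Integrable (fun t => t ^ k * g t) ν :=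
  hk.mono' ((continuous_pow k).aestronglyMeasurable.mul hg.1) (ae_of_all _ fun t => by simp)

theorem integral_withDensity_ofReal {α : Type*} [MeasurableSpace α] {μ : Measure α} {ρ : α → ℝ}
    (hρm : AEMeasurable ρ μ) (hρ0 : ∀ᵐ x ∂μ, 0 ≤ ρ x) (g : α → ℝ) :
    ∫ x, g x ∂μ.withDensity (fun x => ENNReal.ofReal (ρ x)) = ∫ x, ρ x * g x ∂μ := by
  rw [integral_withDensity_eq_integral_toReal_smul₀ hρm.ennreal_ofReal
    (ae_of_all _ fun _ => ENNReal.ofReal_lt_top)]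
  refine integral_congr_ae ?_
  filter_upwards [hρ0] with x hx
  simp [ENNReal.toReal_ofReal hx]

theorem mul_det_of_cons_pow_eq_sum (g : ℝ → ℝ) (c : Fin (n + 1) → Fin n → ℝ) (x : ℝ) :
    g x * det (of fun (a : Fin (n + 1)) => (Fin.cons (x ^ (a : ℕ)) (c a) : Fin (n + 1) → ℝ)) =
      ∑ a : Fin (n + 1),
        x ^ (a : ℕ) * g x * ((-1) ^ (a : ℕ) * det (of fun a' i => c (a.succAbove a') i)) := by
  rw [det_of_cons_eq_sum, mul_sum]
  exact sum_congr rfl fun a _ => by ring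

theorem integral_mul_det_of_cons_pow {g : ℝ → ℝ}
    (hg : ∀ k, Integrable (fun t => t ^ k * g t) ν) (c : Fin (n + 1) → Fin n → ℝ) :
    ∫ x, g x * det (of fun (a : Fin (n + 1)) =>
        (Fin.cons (x ^ (a : ℕ)) (c a) : Fin (n + 1) → ℝ)) ∂ν =
      det (of fun (a : Fin (n + 1)) => (Fin.cons (moment ν g a) (c a) : Fin (n + 1) → ℝ)) := by
  simp_rw [mul_det_of_cons_pow_eq_sum]
  rw [integral_finsetSum _ fun (a : Fin (n + 1)) _ => (hg a).mul_const _, det_of_cons_eq_sum]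
  exact sum_congr rfl fun a _ => integral_mul_const _ _

theorem integrable_mul_momentDet {g : ℝ → ℝ} (hg : ∀ k, Integrable (fun t => t ^ k * g t) ν)
    (h : Fin n → ℝ → ℝ) : Integrable (fun x => g x * momentDet ν h x) ν := by
  simp_rw [momentDet, mul_det_of_cons_pow_eq_sum]
  exact integrable_finsetSum _ fun (a : Fin (n + 1)) _ => (hg a).mul_const _

theorem integral_mul_momentDet_eq_zero {h : Fin n → ℝ → ℝ}
    (hh : ∀ i k, Integrable (fun t => t ^ k * h i t) ν) (i : Fin n) :
    ∫ x, h i x * momentDet ν h x ∂ν = 0 := by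
  simp only [momentDet]
  rw [integral_mul_det_of_cons_pow (hh i)]
  exact det_zero_of_column_eq (Fin.succ_ne_zero i).symm fun a => by simp

variable [SigmaFinite ν]

theorem aestronglyMeasurable_det_of_apply_comp {f : Fin n → ℝ → ℝ}
    (hf : ∀ k, AEStronglyMeasurable (f k) ν) :
    AEStronglyMeasurable (fun y : Fin n → ℝ => det (of fun j k => f k (y j)))
      (Measure.pi fun _ => ν) := by
  simp_rw [det_of_apply_comp_eq_sum]
  have heval : ∀ i k,
      AEStronglyMeasurable (fun y : Fin n → ℝ => f k (y i)) (Measure.pi fun _ => ν) :=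
    fun i k => (hf k).comp_quasiMeasurePreserving (Measure.quasiMeasurePreserving_eval _ i)
  refine Finset.aestronglyMeasurable_fun_sum _ fun τ _ => ?_
  exact (Finset.aestronglyMeasurable_fun_prod _ fun i _ => heval i (τ i)).const_mul _

theorem integrable_det_vandermonde_cons_mul_prod {h : Fin n → ℝ → ℝ}
    (hh : ∀ i k, Integrable (fun t => t ^ k * h i t) ν) (x : ℝ) :
    Integrable (fun y : Fin n → ℝ => det (vandermonde (Fin.cons x y)) * ∏ i, h i (y i))
      (Measure.pi fun _ => ν) := by
  simp_rw [det_vandermonde_cons_mul_prod]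
  exact integrable_finsetSum _ fun σ _ => (Integrable.fintype_prod fun i => hh i _).const_mul _

theorem integral_det_vandermonde_cons_mul_prod {h : Fin n → ℝ → ℝ}
    (hh : ∀ i k, Integrable (fun t => t ^ k * h i t) ν) (x : ℝ) :
    ∫ y : Fin n → ℝ, det (vandermonde (Fin.cons x y)) * ∏ i, h i (y i) ∂(Measure.pi fun _ => ν) =
      momentDet ν h x := by
  simp_rw [det_vandermonde_cons_mul_prod]
  rw [integral_finsetSum _ fun σ _ => (Integrable.fintype_prod fun i => hh i _).const_mul _,
    momentDet, det_eq_sum_perm_fin_succ]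
  refine sum_congr rfl fun σ _ => ?_
  rw [integral_const_mul, integral_fintype_prod_eq_prod (fun i t => t ^ (σ i.succ : ℕ) * h i t)]
  simp [moment, mul_assoc]

theorem integral_prod_filter_lt_sub_mul_det_mul_prod_sub {f : Fin n → ℝ → ℝ}
    (hf : ∀ i k, Integrable (fun t => t ^ k * f i t) ν) (x : ℝ) :
    ∫ y : Fin n → ℝ, (∏ p ∈ univ.filter (fun p : Fin n × Fin n => p.1 < p.2), (y p.2 - y p.1)) *
        det (of fun j k => f k (y j)) * ∏ i, (x - y i) ∂(Measure.pi fun _ => ν) =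
      (-1) ^ n * ∑ τ : Perm (Fin n), (Perm.sign τ : ℤ) * momentDet ν (f ∘ τ) x := by
  have hfτ : ∀ τ : Perm (Fin n), ∀ i k, Integrable (fun t => t ^ k * f (τ i) t) ν :=
    fun τ i => hf (τ i)
  simp_rw [prod_filter_lt_sub_mul_det_mul_prod_sub]
  rw [integral_const_mul, integral_finsetSum _ fun τ _ =>
    (integrable_det_vandermonde_cons_mul_prod (hfτ τ) x).const_mul _]
  simp_rw [integral_const_mul]
  exact congrArg _ (sum_congr rfl fun τ _ =>
    congrArg _ (integral_det_vandermonde_cons_mul_prod (hfτ τ) x))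

end Moments

theorem stmt1_general (n : ℕ) (f : Fin n → ℝ → ℝ)
    (hf : ∀ j, Integrable (f j))
    (hmomf : ∀ j, ∀ k : ℕ, Integrable (fun x : ℝ => |x| ^ k * |f j x|))
    (Z : ℝ)
    (ρ : (Fin n → ℝ) → ℝ)
    (hρ : ∀ x, ρ x = (1 / Z) *
      (∏ p ∈ Finset.univ.filter (fun p : Fin n × Fin n => p.1 < p.2), (x p.2 - x p.1)) *
      Matrix.det (Matrix.of fun j k : Fin n => f k (x j)))
    (hρ0 : ∀ x, 0 ≤ ρ x)
    (μ : Measure (Fin n → ℝ))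
    (hμ : μ = (volume : Measure (Fin n → ℝ)).withDensity (fun x => ENNReal.ofReal (ρ x)))
    (p : Polynomial ℝ)
    (hp : ∀ z : ℝ, p.eval z = ∫ x, (∏ j, (z - x j)) ∂μ) :
    ∀ j : Fin n, ∫ x : ℝ, p.eval x * f j x = 0 := by
  intro j
  have hmom : ∀ i k, Integrable (fun t => t ^ k * f i t) :=
    fun i k => integrable_pow_mul_of_integrable_abs (hf i) (hmomf i k)
  have hρm : AEMeasurable ρ := by
    rw [funext hρ]
    exact ((Continuous.aestronglyMeasurable (by fun_prop)).mul
      (aestronglyMeasurable_det_of_apply_comp fun k => (hf k).1)).aemeasurable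
  have hpx : ∀ x, p.eval x =
      ∑ τ : Perm (Fin n), 1 / Z * (-1) ^ n * (Perm.sign τ : ℤ) * momentDet volume (f ∘ τ) x := by
    intro x
    rw [hp, hμ, integral_withDensity_ofReal hρm (ae_of_all _ hρ0)]
    simp_rw [mul_assoc, ← mul_sum, ← integral_prod_filter_lt_sub_mul_det_mul_prod_sub hmom,
      ← integral_const_mul]
    exact integral_congr_ae (ae_of_all _ fun y => by simp only [hρ]; ring)
  have hτ : ∀ τ : Perm (Fin n), ∫ x, f j x * momentDet volume (f ∘ τ) x = 0 := fun τ => by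
    simpa only [Function.comp_apply, apply_symm_apply] using
      integral_mul_momentDet_eq_zero (h := f ∘ τ) (fun i => hmom (τ i)) (τ.symm j)
  calc ∫ x, p.eval x * f j x
      = ∑ τ : Perm (Fin n),
          1 / Z * (-1) ^ n * (Perm.sign τ : ℤ) * ∫ x, f j x * momentDet volume (f ∘ τ) x := by
        simp_rw [hpx, sum_mul, ← integral_const_mul]
        rw [← integral_finsetSum _ fun τ _ => (integrable_mul_momentDet (hmom j) _).const_mul _]
        exact integral_congr_ae (ae_of_all _ fun x => sum_congr rfl fun τ _ => by ring)
    _ = 0 := by simp [hτ]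

/-- The average characteristic polynomial `p_n` of a polynomial ensemble satisfies
the orthogonality conditions `∫ p_n(x) f_j(x) dx = 0` for `j = 0, …, n-1`. -/
theorem stmt1 (n : ℕ) (hn : 0 < n) (f : Fin n → ℝ → ℝ)
    (hf : ∀ j, Integrable (f j))
    (hmomf : ∀ j, ∀ k : ℕ, Integrable (fun x : ℝ => |x| ^ k * |f j x|))
    (Z : ℝ) (hZ : 0 < Z)
    (ρ : (Fin n → ℝ) → ℝ)
    (hρ : ∀ x, ρ x = (1 / Z) *
      (∏ p ∈ Finset.univ.filter (fun p : Fin n × Fin n => p.1 < p.2), (x p.2 - x p.1)) *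
      Matrix.det (Matrix.of fun j k : Fin n => f k (x j)))
    (hρ0 : ∀ x, 0 ≤ ρ x)
    (μ : Measure (Fin n → ℝ))
    (hμ : μ = (volume : Measure (Fin n → ℝ)).withDensity (fun x => ENNReal.ofReal (ρ x)))
    (hprob : IsProbabilityMeasure μ)
    (hmom : ∀ k : Fin n → ℕ, Integrable (fun x => ∏ j, x j ^ k j) μ)
    (p : Polynomial ℝ)
    (hp : ∀ z : ℝ, p.eval z = ∫ x, (∏ j, (z - x j)) ∂μ) :
    ∀ j : Fin n, ∫ x : ℝ, p.eval x * f j x = 0 :=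
  stmt1_general n f hf hmomf Z ρ hρ hρ0 μ hμ p hp
end

section
/- Let $K \subset \mathbb{R}$ be compact, let $r > \max\{|w| : w \in K\}$, and let $(\mu_n)$ be a sequence of probability measures supported in $K$ converging weakly to a probability measure $\mu$ supported in $K$. Then the functions $f_n(z) = \int \log(1 - s/z)\, d(\mu_n - \mu)(s)$ converge to $0$ uniformly on $\{z \in \mathbb{C} : |z| > r\}$. -/
/-!
Expanding `log (1 - s/z) = -∑ (s/z)^(k+1)/(k+1)` and truncating after `N` terms costs at most
`q^(N+1)/(1-q)` with `q = R/r`, uniformly in `z` and in `s` on the support `[-R, R]`. The truncated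
part integrates to a combination of the first `N` moments with coefficients bounded by `r^(-k)`,
and the moments converge because on `[-R, R]` the power `s^k` agrees with a bounded continuous
function.
-/

open MeasureTheory Filter Topology

lemma tendstoUniformlyOn_zero_of_norm_le {ι α E : Type*} [SeminormedAddCommGroup E]
    {l : Filter ι} {F : ι → α → E} {S : Set α} (e : ℕ → ℝ) (b : ℕ → ι → ℝ)
    (he : Tendsto e atTop (𝓝 0)) (hb : ∀ N, Tendsto (b N) l (𝓝 0))
    (hF : ∀ N i, ∀ z ∈ S, ‖F i z‖ ≤ e N + b N i) :
    TendstoUniformlyOn F 0 l S := by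
  rw [Metric.tendstoUniformlyOn_iff]
  intro ε hε
  obtain ⟨N, hN⟩ := (he.eventually (gt_mem_nhds (half_pos hε))).exists
  filter_upwards [(hb N).eventually (gt_mem_nhds (half_pos hε))] with i hi z hz
  rw [Pi.zero_apply, dist_zero_left]
  linarith [hF N i z hz]

namespace Complex

lemma norm_log_one_sub_add_sum_le {w : ℂ} {q : ℝ} (hw : ‖w‖ ≤ q) (hq : q < 1) (N : ℕ) :
    ‖log (1 - w) + ∑ k ∈ Finset.range N, w ^ (k + 1) / (k + 1)‖ ≤ q ^ (N + 1) / (1 - q) := by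
  have hq₀ : 0 ≤ q := (norm_nonneg w).trans hw
  have htail := (hasSum_nat_add_iff' N).mpr (hasSum_taylorSeries_neg_log' (hw.trans_lt hq))
  have hgeom := (hasSum_geometric_of_lt_one hq₀ hq).mul_left (q ^ (N + 1))
  rw [← norm_neg, neg_add', div_eq_mul_inv]
  refine htail.norm_le_of_bounded hgeom fun k => ?_
  calc ‖w ^ (k + N + 1) / (((k + N : ℕ) : ℂ) + 1)‖ ≤ ‖w‖ ^ (k + N + 1) := by
        rw [norm_div, norm_pow, ← Nat.cast_succ, norm_natCast]
        exact div_le_self (by positivity) (Nat.one_le_cast.mpr (Nat.succ_pos _))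
    _ ≤ q ^ (k + N + 1) := by gcongr
    _ = q ^ (N + 1) * q ^ k := by ring

end Complex

section Moments

variable {R : ℝ}

lemma integrable_pow_of_ae_abs_le {ν : Measure ℝ} [IsFiniteMeasure ν]
    (hν : ∀ᵐ s ∂ν, |s| ≤ R) (k : ℕ) : Integrable (fun s => s ^ k) ν :=
  .of_bound (by fun_prop) (R ^ k) <| hν.mono fun s hs => by
    rw [Real.norm_eq_abs, abs_pow]
    exact pow_le_pow_left₀ (abs_nonneg s) hs k

lemma tendsto_integral_pow_of_ae_abs_le {ι : Type*} {l : Filter ι} {μ : ι → Measure ℝ}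
    {μlim : Measure ℝ} (hμ : ∀ i, ∀ᵐ s ∂μ i, |s| ≤ R) (hμlim : ∀ᵐ s ∂μlim, |s| ≤ R)
    (hweak : ∀ g : BoundedContinuousFunction ℝ ℝ,
      Tendsto (fun i => ∫ s, g s ∂μ i) l (𝓝 (∫ s, g s ∂μlim))) (k : ℕ) :
    Tendsto (fun i => ∫ s, s ^ k ∂μ i) l (𝓝 (∫ s, s ^ k ∂μlim)) := by
  have hclamp : ∀ s, |max (-R) (min R s)| ≤ |R| := fun s => abs_le.2
    ⟨(neg_le_neg (le_abs_self R)).trans (le_max_left _ _),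
      max_le (neg_le_abs R) ((min_le_left _ _).trans (le_abs_self R))⟩
  let g := BoundedContinuousFunction.ofNormedAddCommGroup (fun s => max (-R) (min R s) ^ k)
    (by fun_prop) (|R| ^ k) fun s => by
      rw [Real.norm_eq_abs, abs_pow]
      exact pow_le_pow_left₀ (abs_nonneg _) (hclamp s) k
  have hg : ∀ ν : Measure ℝ, (∀ᵐ s ∂ν, |s| ≤ R) → ∫ s, g s ∂ν = ∫ s, s ^ k ∂ν :=
    fun ν hν => integral_congr_ae <| hν.mono fun s hs => by
      obtain ⟨hl, hu⟩ := abs_le.1 hs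
      simp [g, min_eq_right hu, max_eq_right hl]
  simpa only [hg _ (hμ _), hg _ hμlim] using hweak g

end Moments

section LogPotential

variable {R r : ℝ} {ν : Measure ℝ}

lemma integrable_ofReal_div_pow [IsFiniteMeasure ν] (hν : ∀ᵐ s ∂ν, |s| ≤ R) (z : ℂ) (k : ℕ) :
    Integrable (fun s : ℝ => ((s : ℂ) / z) ^ k) ν := by
  simp_rw [div_pow, ← Complex.ofReal_pow]
  exact (integrable_pow_of_ae_abs_le hν k).ofReal.div_const (z ^ k)

lemma integral_sum_div_pow_eq [IsFiniteMeasure ν] (hν : ∀ᵐ s ∂ν, |s| ≤ R) (z : ℂ) (N : ℕ) :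
    ∫ s, ∑ k ∈ Finset.range N, ((s : ℂ) / z) ^ (k + 1) / (k + 1) ∂ν
      = ∑ k ∈ Finset.range N, ((∫ s, s ^ (k + 1) ∂ν : ℝ) : ℂ) / ((k + 1) * z ^ (k + 1)) := by
  rw [integral_finsetSum _ fun k _ => (integrable_ofReal_div_pow hν z _).div_const _]
  refine Finset.sum_congr rfl fun k _ => ?_
  simp_rw [div_pow, ← Complex.ofReal_pow, integral_div, integral_complex_ofReal, div_div, mul_comm]

lemma exists_integral_log_one_sub_div_eq [IsProbabilityMeasure ν] (hR : 0 ≤ R) (hRr : R < r)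
    (hν : ∀ᵐ s ∂ν, |s| ≤ R) {z : ℂ} (hz : r < ‖z‖) (N : ℕ) :
    ∃ t : ℂ, ‖t‖ ≤ (R / r) ^ (N + 1) / (1 - R / r) ∧
      ∫ s, Complex.log (1 - s / z) ∂ν
        = t - ∑ k ∈ Finset.range N, ((∫ s, s ^ (k + 1) ∂ν : ℝ) : ℂ) / ((k + 1) * z ^ (k + 1)) := by
  have hr : 0 < r := hR.trans_lt hRr
  have hq : R / r < 1 := (div_lt_one hr).2 hRr
  have hsz : ∀ᵐ s : ℝ ∂ν, ‖(s : ℂ) / z‖ ≤ R / r := hν.mono fun s hs => by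
    rw [norm_div, Complex.norm_real, Real.norm_eq_abs]
    exact div_le_div₀ hR hs hr hz.le
  have hlog : Integrable (fun s : ℝ => Complex.log (1 - s / z)) ν :=
    .of_bound (Complex.measurable_log.comp (by fun_prop)).aestronglyMeasurable
      (R / r / (1 - R / r)) <| hsz.mono fun s hs => by
        simpa using Complex.norm_log_one_sub_add_sum_le hs hq 0
  have hsum : Integrable
      (fun s : ℝ => ∑ k ∈ Finset.range N, ((s : ℂ) / z) ^ (k + 1) / (k + 1)) ν :=
    integrable_finsetSum _ fun k _ => (integrable_ofReal_div_pow hν z _).div_const _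
  refine ⟨∫ s, (Complex.log (1 - s / z)
    + ∑ k ∈ Finset.range N, ((s : ℂ) / z) ^ (k + 1) / (k + 1)) ∂ν, ?_, ?_⟩
  · simpa using norm_integral_le_of_norm_le_const
      (hsz.mono fun s hs => Complex.norm_log_one_sub_add_sum_le hs hq N)
  · rw [integral_add hlog hsum, integral_sum_div_pow_eq hν, add_sub_cancel_right]

lemma norm_integral_log_one_sub_div_sub_le {ν' : Measure ℝ} [IsProbabilityMeasure ν]
    [IsProbabilityMeasure ν'] (hR : 0 ≤ R) (hRr : R < r) (hν : ∀ᵐ s ∂ν, |s| ≤ R)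
    (hν' : ∀ᵐ s ∂ν', |s| ≤ R) {z : ℂ} (hz : r < ‖z‖) (N : ℕ) :
    ‖∫ s, Complex.log (1 - s / z) ∂ν - ∫ s, Complex.log (1 - s / z) ∂ν'‖
      ≤ 2 * ((R / r) ^ (N + 1) / (1 - R / r))
        + ∑ k ∈ Finset.range N, |∫ s, s ^ (k + 1) ∂ν - ∫ s, s ^ (k + 1) ∂ν'| / r ^ (k + 1) := by
  obtain ⟨t, ht, hνt⟩ := exists_integral_log_one_sub_div_eq hR hRr hν hz N
  obtain ⟨t', ht', hνt'⟩ := exists_integral_log_one_sub_div_eq hR hRr hν' hz N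
  have hterm : ∀ k : ℕ, ∀ a b : ℝ,
      ‖(a : ℂ) / ((k + 1) * z ^ (k + 1)) - (b : ℂ) / ((k + 1) * z ^ (k + 1))‖
        ≤ |a - b| / r ^ (k + 1) := fun k a b => by
    rw [div_sub_div_same, ← Complex.ofReal_sub, norm_div, Complex.norm_real, Real.norm_eq_abs,
      norm_mul, norm_pow, ← Nat.cast_succ, norm_natCast]
    have hzk : r ^ (k + 1) ≤ ‖z‖ ^ (k + 1) := by gcongr; exact hR.trans hRr.le
    gcongr
    · exact pow_pos (hR.trans_lt hRr) _
    · exact hzk.trans (le_mul_of_one_le_left (by positivity) (Nat.one_le_cast.2 k.succ_pos))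
  rw [hνt, hνt', sub_sub_sub_comm, ← Finset.sum_sub_distrib]
  calc _ ≤ ‖t - t'‖ + ‖∑ k ∈ Finset.range N, _‖ := norm_sub_le _ _
    _ ≤ ‖t‖ + ‖t'‖ + _ := add_le_add (norm_sub_le _ _) (norm_sum_le _ _)
    _ ≤ _ := by
      rw [two_mul]
      exact add_le_add (add_le_add ht ht') (Finset.sum_le_sum fun k _ => hterm k _ _)

theorem tendstoUniformlyOn_integral_log_one_sub_div {ι : Type*} {l : Filter ι}
    {μ : ι → Measure ℝ} [∀ i, IsProbabilityMeasure (μ i)] {μlim : Measure ℝ}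
    [IsProbabilityMeasure μlim] (hR : 0 ≤ R) (hRr : R < r) (hμ : ∀ i, ∀ᵐ s ∂μ i, |s| ≤ R)
    (hμlim : ∀ᵐ s ∂μlim, |s| ≤ R)
    (hweak : ∀ g : BoundedContinuousFunction ℝ ℝ,
      Tendsto (fun i => ∫ s, g s ∂μ i) l (𝓝 (∫ s, g s ∂μlim))) :
    TendstoUniformlyOn
      (fun i z => (∫ s, Complex.log (1 - (s : ℂ) / z) ∂μ i)
        - ∫ s, Complex.log (1 - (s : ℂ) / z) ∂μlim)
      0 l {z : ℂ | r < ‖z‖} := by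
  have hq : R / r < 1 := (div_lt_one (hR.trans_lt hRr)).2 hRr
  refine tendstoUniformlyOn_zero_of_norm_le _ _ ?_ (fun N => ?_)
    fun N i z hz => norm_integral_log_one_sub_div_sub_le hR hRr (hμ i) hμlim hz N
  · have hpow := (tendsto_pow_atTop_nhds_zero_of_lt_one
      (div_nonneg hR (hR.trans hRr.le)) hq).comp (tendsto_add_atTop_nat 1)
    simpa using (hpow.div_const (1 - R / r)).const_mul 2
  · have hmoment := fun k : ℕ =>
      (((tendsto_integral_pow_of_ae_abs_le hμ hμlim hweak (k + 1)).sub_const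
        (∫ s, s ^ (k + 1) ∂μlim)).abs.div_const (r ^ (k + 1)))
    simpa using tendsto_finsetSum (Finset.range N) fun k _ => hmoment k

end LogPotential

/-- If probability measures `μ_n` supported in a compact `K ⊂ ℝ` converge weakly to `μ`,
then `f_n(z) = ∫ log(1-s/z) d(μ_n - μ)(s)` converges to `0` uniformly on `{|z| > r}`,
where `r > max{|w| : w ∈ K}`. -/
theorem stmt3 (K : Set ℝ) (hK : IsCompact K) (r : ℝ) (hr : ∀ w ∈ K, |w| < r)
    (μ : ℕ → Measure ℝ) (μlim : Measure ℝ)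
    (hprob : ∀ n, IsProbabilityMeasure (μ n)) (hproblim : IsProbabilityMeasure μlim)
    (hsupp : ∀ n, μ n Kᶜ = 0) (hsupplim : μlim Kᶜ = 0)
    (hweak : ∀ g : BoundedContinuousFunction ℝ ℝ,
      Tendsto (fun n => ∫ s, g s ∂(μ n)) atTop (nhds (∫ s, g s ∂μlim))) :
    TendstoUniformlyOn
      (fun n z => (∫ s, Complex.log (1 - (s : ℂ) / z) ∂(μ n))
        - ∫ s, Complex.log (1 - (s : ℂ) / z) ∂μlim)
      0 atTop {z : ℂ | r < ‖z‖} := by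
  have hK_ae : ∀ ν : Measure ℝ, ν Kᶜ = 0 → ∀ᵐ s ∂ν, s ∈ K := fun ν h => ae_iff.2 h
  obtain ⟨w, hwK⟩ := (hK_ae μlim hsupplim).exists
  obtain ⟨w₀, hw₀K, hw₀max⟩ := hK.exists_isMaxOn ⟨w, hwK⟩ continuous_abs.continuousOn
  have hbound : ∀ ν : Measure ℝ, ν Kᶜ = 0 → ∀ᵐ s ∂ν, |s| ≤ |w₀| :=
    fun ν h => (hK_ae ν h).mono fun s hs => hw₀max hs
  exact tendstoUniformlyOn_integral_log_one_sub_div (abs_nonneg w₀) (hr w₀ hw₀K)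
    (fun n => hbound _ (hsupp n)) (hbound _ hsupplim) hweak
end

section
/- Let $\mu$ be a probability measure on $[0,b]$ with density $\frac{1}{2\pi}\sqrt{\frac{b-x}{x}}\,h(x)$, $h$ a polynomial positive on $[0,b]$, and let $u_\epsilon < 0$ be the unique negative solution of $\int \frac{d\mu(x)}{(x-u)^2} = \epsilon^{-2}$. Then there exists $\kappa > 0$ such that $u_\epsilon = -\kappa\,\epsilon^{4/3}(1 + o(1))$ as $\epsilon \to 0$. -/
/-!
Write `t = -u_ε > 0`. The density is `φ(x) / √x` with `φ(x) = √(b - x) h(x) / (2π)` bounded and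
`φ(0⁺) = √b h(0) / (2π)`. The substitution `x = t y` gives
`t^{3/2} ∫ dμ(x) / (x + t)² = ∫₀^∞ φ(t y) y^{-1/2} (y + 1)⁻² dy`, which tends by dominated
convergence to `C = φ(0) ∫₀^∞ y^{-1/2} (y + 1)⁻² dy > 0` (in fact `C = h(0) √b / 4`).
Since `μ` is a probability measure on `[0, ∞)`, the defining equation forces `t ≤ ε`, so `t → 0`,
and then `t^{3/2} ε⁻² → C` yields `t / ε^{4/3} → C^{2/3} = κ`.
-/

open MeasureTheory Filter Set Topology

lemma integrableOn_Ioi_inv_sqrt_mul_inv_add_one_sq :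
    IntegrableOn (fun y : ℝ => (√y)⁻¹ * ((y + 1) ^ 2)⁻¹) (Ioi 0) := by
  have hmeas : AEStronglyMeasurable (fun y : ℝ => (√y)⁻¹ * ((y + 1) ^ 2)⁻¹) := by fun_prop
  rw [← Ioc_union_Ioi_eq_Ioi zero_le_one, integrableOn_union]
  constructor
  · have hint : IntegrableOn (fun y : ℝ => y ^ (-(1 / 2) : ℝ)) (Ioc 0 1) :=
      (intervalIntegrable_iff_integrableOn_Ioc_of_le zero_le_one).1
        (intervalIntegral.intervalIntegrable_rpow' (by norm_num))
    refine hint.mono' hmeas.restrict <| (ae_restrict_iff' measurableSet_Ioc).2 <| .of_forall ?_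
    intro y ⟨hy0, _⟩
    rw [Real.rpow_neg hy0.le, ← Real.sqrt_eq_rpow, Real.norm_of_nonneg (by positivity)]
    exact mul_le_of_le_one_right (by positivity) (inv_le_one_of_one_le₀ (by nlinarith))
  · have hint : IntegrableOn (fun y : ℝ => y ^ (-2 : ℝ)) (Ioi 1) :=
      integrableOn_Ioi_rpow_of_lt (by norm_num) one_pos
    refine hint.mono' hmeas.restrict <| (ae_restrict_iff' measurableSet_Ioi).2 <| .of_forall ?_
    intro y (hy : 1 < y)
    rw [Real.rpow_neg (by linarith), Real.norm_of_nonneg (by positivity)]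
    have hs : (√y)⁻¹ ≤ 1 := inv_le_one_of_one_le₀ (Real.one_le_sqrt.2 hy.le)
    calc (√y)⁻¹ * ((y + 1) ^ 2)⁻¹ ≤ 1 * ((y + 1) ^ 2)⁻¹ := by gcongr
      _ ≤ (y ^ (2 : ℝ))⁻¹ := by
        rw [one_mul, Real.rpow_two]; gcongr; linarith

lemma setIntegral_Ioi_inv_sqrt_mul_inv_add_one_sq_pos :
    0 < ∫ y in Ioi (0 : ℝ), (√y)⁻¹ * ((y + 1) ^ 2)⁻¹ := by
  rw [setIntegral_pos_iff_support_of_nonneg_ae (.of_forall fun y => by positivity)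
    integrableOn_Ioi_inv_sqrt_mul_inv_add_one_sq]
  have : Ioi (0 : ℝ) ⊆ Function.support fun y : ℝ => (√y)⁻¹ * ((y + 1) ^ 2)⁻¹ := by
    intro y (hy : 0 < y)
    have := Real.sqrt_pos.2 hy
    simp only [Function.mem_support]
    positivity
  rw [inter_eq_right.2 this, Real.volume_Ioi]
  exact ENNReal.zero_lt_top

lemma rpow_three_halves_mul_setIntegral_eq (ρ : ℝ → ℝ) {t : ℝ} (ht : 0 < t) :
    t ^ (3 / 2 : ℝ) * ∫ x in Ioi 0, ρ x * ((x + t) ^ 2)⁻¹ =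
      ∫ y in Ioi 0, √(t * y) * ρ (t * y) * ((√y)⁻¹ * ((y + 1) ^ 2)⁻¹) := by
  have hscale := integral_comp_mul_left_Ioi (fun x => ρ x * ((x + t) ^ 2)⁻¹) 0 ht
  rw [mul_zero, smul_eq_mul, eq_inv_mul_iff_mul_eq₀ ht.ne'] at hscale
  rw [← hscale, ← mul_assoc, ← integral_const_mul]
  refine setIntegral_congr_fun measurableSet_Ioi fun y (hy : 0 < y) => ?_
  have hpow : t ^ (3 / 2 : ℝ) = t * √t := by
    rw [Real.sqrt_eq_rpow, ← Real.rpow_one_add' ht.le (by norm_num)]; norm_num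
  have hsy : 0 < √y := Real.sqrt_pos.2 hy
  rw [hpow, Real.sqrt_mul ht.le]
  field_simp

theorem tendsto_rpow_three_halves_mul_setIntegral {ρ : ℝ → ℝ} {c K : ℝ} (hρ : Measurable ρ)
    (hbound : ∀ x > 0, |√x * ρ x| ≤ K)
    (hlim : Tendsto (fun x => √x * ρ x) (𝓝[>] 0) (𝓝 c)) :
    Tendsto (fun t => t ^ (3 / 2 : ℝ) * ∫ x in Ioi 0, ρ x * ((x + t) ^ 2)⁻¹) (𝓝[>] 0)
      (𝓝 (c * ∫ y in Ioi 0, (√y)⁻¹ * ((y + 1) ^ 2)⁻¹)) := by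
  set w : ℝ → ℝ := fun y => (√y)⁻¹ * ((y + 1) ^ 2)⁻¹
  rw [← integral_const_mul]
  refine Tendsto.congr' (eventually_nhdsWithin_of_forall fun t (ht : 0 < t) =>
    (rpow_three_halves_mul_setIntegral_eq ρ ht).symm) ?_
  refine tendsto_integral_filter_of_dominated_convergence (fun y => K * w y)
    (.of_forall fun t => by fun_prop) ?_
    (integrableOn_Ioi_inv_sqrt_mul_inv_add_one_sq.const_mul K) ?_
  · filter_upwards [self_mem_nhdsWithin] with t (ht : 0 < t)
    refine (ae_restrict_iff' measurableSet_Ioi).2 (.of_forall fun y (hy : 0 < y) => ?_)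
    rw [norm_mul, Real.norm_of_nonneg (by positivity : 0 ≤ w y)]
    exact mul_le_mul_of_nonneg_right (hbound _ (mul_pos ht hy)) (by positivity)
  · refine (ae_restrict_iff' measurableSet_Ioi).2 (.of_forall fun y (hy : 0 < y) => ?_)
    have hscale : Tendsto (fun t => t * y) (𝓝[>] 0) (𝓝[>] 0) := by
      refine tendsto_nhdsWithin_of_tendsto_nhds_of_eventually_within _ ?_ ?_
      · exact ((continuous_mul_const y).tendsto' 0 0 (zero_mul y)).mono_left nhdsWithin_le_nhds
      · filter_upwards [self_mem_nhdsWithin] with t (ht : 0 < t) using mul_pos ht hy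
    exact (hlim.comp hscale).mul_const (w y)

section SqrtDensity

variable {a b : ℝ} {g : ℝ → ℝ}

lemma sqrt_mul_indicator_sqrt_div_eq (x : ℝ) :
    √x * (Ioo 0 b).indicator (fun x => a * √((b - x) / x) * g x) x =
      (Ioo 0 b).indicator (fun x => a * √(b - x) * g x) x := by
  by_cases hx : x ∈ Ioo 0 b
  · have hsx : 0 < √x := Real.sqrt_pos.2 hx.1
    rw [indicator_of_mem hx, indicator_of_mem hx, Real.sqrt_div' _ hx.1.le]
    field_simp
  · rw [indicator_of_notMem hx, indicator_of_notMem hx, mul_zero]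

lemma exists_abs_sqrt_mul_indicator_sqrt_div_le (hb : 0 < b) (hg : Continuous g) :
    ∃ K, ∀ x, |√x * (Ioo 0 b).indicator (fun x => a * √((b - x) / x) * g x) x| ≤ K := by
  obtain ⟨K, hK⟩ := isCompact_Icc.exists_bound_of_continuousOn (s := Icc 0 b)
    (f := fun x => a * √(b - x) * g x) (by fun_prop)
  have hK0 : 0 ≤ K := (norm_nonneg _).trans (hK 0 ⟨le_rfl, hb.le⟩)
  refine ⟨K, fun x => ?_⟩
  rw [sqrt_mul_indicator_sqrt_div_eq]
  by_cases hx : x ∈ Ioo 0 b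
  · rw [indicator_of_mem hx]
    exact hK x (Ioo_subset_Icc_self hx)
  · rwa [indicator_of_notMem hx, abs_zero]

lemma tendsto_sqrt_mul_indicator_sqrt_div (hb : 0 < b) (hg : Continuous g) :
    Tendsto (fun x => √x * (Ioo 0 b).indicator (fun x => a * √((b - x) / x) * g x) x)
      (𝓝[>] 0) (𝓝 (a * √b * g 0)) := by
  have hcont : Tendsto (fun x => a * √(b - x) * g x) (𝓝[>] 0) (𝓝 (a * √b * g 0)) := by
    simpa using ((by fun_prop : Continuous fun x => a * √(b - x) * g x).tendsto 0).mono_left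
      nhdsWithin_le_nhds
  refine hcont.congr' ?_
  filter_upwards [Ioo_mem_nhdsGT hb] with x hx
  rw [sqrt_mul_indicator_sqrt_div_eq, indicator_of_mem hx]

end SqrtDensity

lemma integral_withDensity_ofReal_eq_setIntegral {X : Type*} [MeasurableSpace X]
    {μ : Measure X} {ρ : X → ℝ} {s : Set X} (hρ : Measurable ρ)
    (hρ0 : ∀ x, 0 ≤ ρ x) (hρs : ∀ x ∉ s, ρ x = 0) (g : X → ℝ) :
    ∫ x, g x ∂μ.withDensity (fun x => ENNReal.ofReal (ρ x)) = ∫ x in s, ρ x * g x ∂μ := by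
  rw [integral_withDensity_eq_integral_toReal_smul hρ.ennreal_ofReal
    (.of_forall fun _ => ENNReal.ofReal_lt_top)]
  simp only [ENNReal.toReal_ofReal (hρ0 _), smul_eq_mul]
  exact (setIntegral_eq_integral_of_forall_compl_eq_zero fun x hx => by
    rw [hρs x hx, zero_mul]).symm

lemma ae_mem_withDensity_ofReal {X : Type*} [MeasurableSpace X] {μ : Measure X} {ρ : X → ℝ}
    {s : Set X} (hρ : Measurable ρ) (hρs : ∀ x ∉ s, ρ x = 0) :
    ∀ᵐ x ∂μ.withDensity (fun x => ENNReal.ofReal (ρ x)), x ∈ s := by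
  rw [ae_withDensity_iff hρ.ennreal_ofReal]
  exact .of_forall fun x hx => by_contra fun hxs => hx (by rw [hρs x hxs, ENNReal.ofReal_zero])

lemma integral_inv_sub_sq_le {μ : Measure ℝ} [IsProbabilityMeasure μ] {u : ℝ} (hu : u < 0)
    (hμ : ∀ᵐ x ∂μ, 0 ≤ x) : ∫ x, ((x - u) ^ 2)⁻¹ ∂μ ≤ (u ^ 2)⁻¹ := by
  calc ∫ x, ((x - u) ^ 2)⁻¹ ∂μ ≤ ∫ _, (u ^ 2)⁻¹ ∂μ :=
        integral_mono_of_nonneg (.of_forall fun x => by positivity) (integrable_const _)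
          (hμ.mono fun x hx => inv_anti₀ (sq_pos_of_neg hu) (by nlinarith))
    _ = (u ^ 2)⁻¹ := by simp

lemma tendsto_neg_nhdsGT_of_integral_inv_sub_sq_eq {μ : Measure ℝ} [IsProbabilityMeasure μ]
    {u : ℝ → ℝ} (hμ : ∀ᵐ x ∂μ, 0 ≤ x)
    (hu : ∀ ε : ℝ, 0 < ε → u ε < 0 ∧ ∫ x, ((x - u ε) ^ 2)⁻¹ ∂μ = (ε ^ 2)⁻¹) :
    Tendsto (fun ε => -u ε) (𝓝[>] 0) (𝓝[>] 0) := by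
  have hu_pos : ∀ᶠ ε in 𝓝[>] 0, 0 < -u ε :=
    eventually_nhdsWithin_of_forall fun ε hε => neg_pos.2 (hu ε hε).1
  have hu_le (ε : ℝ) (hε : 0 < ε) : -u ε ≤ ε := by
    obtain ⟨hu0, hu_eq⟩ := hu ε hε
    have hle := integral_inv_sub_sq_le hu0 hμ
    rw [hu_eq, inv_le_inv₀ (by positivity) (sq_pos_of_neg hu0)] at hle
    nlinarith
  refine tendsto_nhdsWithin_of_tendsto_nhds_of_eventually_within _ ?_ hu_pos
  exact tendsto_of_tendsto_of_tendsto_of_le_of_le' tendsto_const_nhds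
    (tendsto_id.mono_left nhdsWithin_le_nhds) (hu_pos.mono fun _ => le_of_lt)
    (eventually_nhdsWithin_of_forall hu_le)

lemma tendsto_div_rpow_four_thirds {F t : ℝ → ℝ} {C : ℝ} (hC : 0 < C)
    (hF : Tendsto (fun s => s ^ (3 / 2 : ℝ) * F s) (𝓝[>] 0) (𝓝 C))
    (ht : Tendsto t (𝓝[>] 0) (𝓝[>] 0)) (hFt : ∀ᶠ ε in 𝓝[>] 0, F (t ε) = (ε ^ 2)⁻¹) :
    Tendsto (fun ε => t ε / ε ^ (4 / 3 : ℝ)) (𝓝[>] 0) (𝓝 (C ^ (2 / 3 : ℝ))) := by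
  refine ((hF.comp ht).rpow_const (Or.inl hC.ne')).congr' ?_
  filter_upwards [hFt, self_mem_nhdsWithin, ht self_mem_nhdsWithin]
    with ε hε (hε0 : 0 < ε) (htε : 0 < t ε)
  rw [Function.comp_apply, hε, Real.mul_rpow (by positivity) (by positivity),
    ← Real.rpow_mul htε.le, ← Real.rpow_natCast, ← Real.rpow_neg_one, ← Real.rpow_mul hε0.le,
    ← Real.rpow_mul hε0.le]
  norm_num [Real.rpow_neg hε0.le, div_eq_mul_inv]

/-- If `u_ε < 0` is the unique negative solution of `∫ dμ(x)/(x-u)² = ε⁻²` for the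
Marchenko–Pastur type measure `μ`, then `u_ε = -κ ε^{4/3}(1+o(1))` as `ε → 0⁺`
for some `κ > 0`. -/
theorem stmt7 (b : ℝ) (hb : 0 < b) (h : Polynomial ℝ)
    (hpos : ∀ x ∈ Set.Icc 0 b, 0 < h.eval x)
    (μ : Measure ℝ)
    (hμ : μ = volume.withDensity fun x =>
      ENNReal.ofReal (Set.indicator (Set.Ioo 0 b)
        (fun x => (1 / (2 * Real.pi)) * Real.sqrt ((b - x) / x) * h.eval x) x))
    (hprob : IsProbabilityMeasure μ)
    (u : ℝ → ℝ)
    (hu : ∀ ε : ℝ, 0 < ε → u ε < 0 ∧ (∫ x, ((x - u ε) ^ 2)⁻¹ ∂μ) = (ε ^ 2)⁻¹) :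
    ∃ κ : ℝ, 0 < κ ∧
      Tendsto (fun ε : ℝ => u ε / (-κ * ε ^ ((4 : ℝ) / 3)))
        (nhdsWithin 0 (Set.Ioi 0)) (nhds 1) := by
  set ρ : ℝ → ℝ := (Ioo 0 b).indicator fun x => 1 / (2 * Real.pi) * √((b - x) / x) * h.eval x
  have hρ : Measurable ρ := by
    have := h.continuous.measurable
    exact Measurable.indicator (by fun_prop) measurableSet_Ioo
  have hρ0 : ∀ x, 0 ≤ ρ x := indicator_nonneg fun x hx => by
    have := hpos x (Ioo_subset_Icc_self hx)
    positivity
  have hρs : ∀ x ∉ Ioi 0, ρ x = 0 := fun x hx => indicator_of_notMem (fun hx' => hx hx'.1) _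
  have hμ_integral (v : ℝ) :
      ∫ x, ((x - v) ^ 2)⁻¹ ∂μ = ∫ x in Ioi 0, ρ x * ((x + -v) ^ 2)⁻¹ := by
    simp_rw [hμ, integral_withDensity_ofReal_eq_setIntegral hρ hρ0 hρs, sub_eq_add_neg]
  have hμ_nonneg : ∀ᵐ x ∂μ, 0 ≤ x :=
    hμ ▸ (ae_mem_withDensity_ofReal hρ hρs).mono fun x (hx : 0 < x) => hx.le
  have hu_tendsto := tendsto_neg_nhdsGT_of_integral_inv_sub_sq_eq hμ_nonneg hu
  obtain ⟨K, hK⟩ := exists_abs_sqrt_mul_indicator_sqrt_div_le (a := 1 / (2 * Real.pi)) hb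
    h.continuous
  set C := 1 / (2 * Real.pi) * √b * h.eval 0 * ∫ y in Ioi 0, (√y)⁻¹ * ((y + 1) ^ 2)⁻¹
  have hC : 0 < C := by
    have := hpos 0 ⟨le_rfl, hb.le⟩
    have := Real.sqrt_pos.2 hb
    have := setIntegral_Ioi_inv_sqrt_mul_inv_add_one_sq_pos
    positivity
  have hasymp := tendsto_rpow_three_halves_mul_setIntegral hρ (fun x _ => hK x)
    (tendsto_sqrt_mul_indicator_sqrt_div hb h.continuous)
  have hratio := tendsto_div_rpow_four_thirds hC hasymp hu_tendsto
    (eventually_nhdsWithin_of_forall fun ε hε => (hμ_integral (u ε)).symm.trans (hu ε hε).2)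
  refine ⟨C ^ (2 / 3 : ℝ), Real.rpow_pos_of_pos hC _, ?_⟩
  have hlim := hratio.div_const (C ^ (2 / 3 : ℝ))
  rw [div_self (Real.rpow_pos_of_pos hC _).ne'] at hlim
  refine hlim.congr fun ε => ?_
  rw [neg_mul, div_neg, ← neg_div, div_div, mul_comm]
end

section
/- There exists $C > 0$ such that for all $n \in \mathbb{N}$ and all $k \in \{0, 1, \dots, n-1\}$, $\frac{n^{-k-\frac{1}{2}}\,\Gamma(n + 1/2)}{\Gamma(k+1)\,\Gamma(n-k)} \le C$. -/
/-! Log-convexity of `Γ` gives `Γ(n + 1/2) ≤ √n Γ(n)`, so the quotient is at most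
`n^{-k} (n-1)! / (k! (n-1-k)!) = n^{-k} binom(n-1, k) ≤ 1`; one may take `C = 1`. -/

open Real Nat

theorem Real.Gamma_add_half_le_sqrt_mul_Gamma {x : ℝ} (hx : 0 < x) :
    Gamma (x + 1 / 2) ≤ √x * Gamma x := by
  have h := Gamma_mul_add_mul_le_rpow_Gamma_mul_rpow_Gamma hx (by linarith : 0 < x + 1)
    (by norm_num : (0 : ℝ) < 1 / 2) (by norm_num : (0 : ℝ) < 1 / 2) (by norm_num)
  rw [Gamma_add_one hx.ne', mul_rpow hx.le (Gamma_pos_of_pos hx).le, mul_left_comm,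
    ← rpow_add (Gamma_pos_of_pos hx), ← sqrt_eq_rpow, add_halves, rpow_one] at h
  calc Gamma (x + 1 / 2) = Gamma (1 / 2 * x + 1 / 2 * (x + 1)) := by ring_nf
    _ ≤ √x * Gamma x := h

theorem Real.Gamma_natCast_sub_natCast {n k : ℕ} (hk : k < n) :
    Gamma ((n : ℝ) - k) = (n - 1 - k)! := by
  obtain ⟨m, rfl⟩ : ∃ m, n = k + m + 1 := ⟨n - k - 1, by omega⟩
  rw [show k + m + 1 - 1 - k = m by omega, ← Gamma_nat_eq_factorial]
  push_cast
  ring_nf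

theorem Real.Gamma_mul_Gamma_mul_choose {n k : ℕ} (hk : k < n) :
    Gamma (k + 1) * Gamma ((n : ℝ) - k) * (n - 1).choose k = Gamma n := by
  have hn : Gamma n = (n - 1 - 0)! := by simpa using Gamma_natCast_sub_natCast (k := 0) (by omega)
  rw [hn, Gamma_nat_eq_factorial, Gamma_natCast_sub_natCast hk, Nat.sub_zero,
    ← Nat.choose_mul_factorial_mul_factorial (by omega : k ≤ n - 1)]
  push_cast
  ring

theorem Nat.choose_pred_le_pow (n k : ℕ) : ((n - 1).choose k : ℝ) ≤ (n : ℝ) ^ k := by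
  calc ((n - 1).choose k : ℝ) ≤ ((n - 1 : ℕ) : ℝ) ^ k := by exact_mod_cast Nat.choose_le_pow _ _
    _ ≤ (n : ℝ) ^ k := by gcongr; exact_mod_cast Nat.sub_le n 1

/-- Uniform Stirling-type bound: there is `C > 0` such that for all `n` and `k < n`,
`n^{-k-1/2} Γ(n+1/2) / (Γ(k+1) Γ(n-k)) ≤ C`. -/
theorem stmt12 :
    ∃ C : ℝ, 0 < C ∧ ∀ n k : ℕ, k < n →
      (n : ℝ) ^ (-(k : ℝ) - 1 / 2) * Real.Gamma ((n : ℝ) + 1 / 2) /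
          (Real.Gamma ((k : ℝ) + 1) * Real.Gamma ((n : ℝ) - (k : ℝ))) ≤ C := by
  refine ⟨1, one_pos, fun n k hkn => ?_⟩
  have hn : (0 : ℝ) < n := by exact_mod_cast (k.zero_le.trans_lt hkn)
  have hnk : (0 : ℝ) < n - k := sub_pos.2 (by exact_mod_cast hkn)
  have hden : 0 < Gamma ((k : ℝ) + 1) * Gamma ((n : ℝ) - k) :=
    mul_pos (Gamma_pos_of_pos (by positivity)) (Gamma_pos_of_pos hnk)
  have hscale : (n : ℝ) ^ (-(k : ℝ) - 1 / 2) * √n = ((n : ℝ) ^ k)⁻¹ := by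
    rw [sqrt_eq_rpow, ← rpow_add hn, ← rpow_natCast, ← rpow_neg hn.le]
    norm_num
  rw [div_le_one hden]
  calc (n : ℝ) ^ (-(k : ℝ) - 1 / 2) * Gamma (n + 1 / 2)
      ≤ (n : ℝ) ^ (-(k : ℝ) - 1 / 2) * (√n * Gamma n) := by
        gcongr; exact Gamma_add_half_le_sqrt_mul_Gamma hn
    _ = (n - 1).choose k / (n : ℝ) ^ k * (Gamma (k + 1) * Gamma (n - k)) := by
        rw [← Gamma_mul_Gamma_mul_choose hkn, ← mul_assoc, hscale]
        ring
    _ ≤ Gamma (k + 1) * Gamma (n - k) := by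
        refine mul_le_of_le_one_left hden.le ?_
        exact div_le_one_of_le₀ (Nat.choose_pred_le_pow n k) (by positivity)
end
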